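/- (Unbiasedness of the 𝓜₂ estimating function at the truth.) Suppose E(Y | Z, X, R=1) = 𝓗(X)·τ(Z,X) + ω(X) a.s. for measurable functions 𝓗, ω, and P(D=1 | Z,X,R=0) = τ(Z,X) a.s. (propensity score equality). Then for every measurable function G : 𝒳×{0,1} → ℝ^k such that the integrand is integrable, E[ G(X,Z) · { R·[Y − 𝓗(X)·τ(Z,X) − ω(X)] − (1−R)·𝓗(X)·[D − τ(Z,X)] } ] = 0. -/

import Mathlib

open MeasureTheory ProbabilityTheory

/-! Split the expectation on `R`. On `{R = 1}` the integrand is `(Y - E[Y | Z, X, R = 1]) • G(X, Z)`,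
and on `{R = 0}` it is `(D - E[D | Z, X, R = 0]) • (-𝓗(X) • G(X, Z))`; in both cases a residual
of a conditional expectation given `(Z, X)` is multiplied by a `(Z, X)`-measurable weight, so its
expectation under the conditioned measure vanishes by the pull-out property. -/

section

variable {Ω E : Type*} [NormedAddCommGroup E]

theorem integral_sub_smul_eq_zero_of_condExp_ae_eq [NormedSpace ℝ E] [CompleteSpace E]
    {m m0 : MeasurableSpace Ω} {μ : Measure Ω} [IsFiniteMeasure μ] (hm : m ≤ m0)
    {f e : Ω → ℝ} {g : Ω → E} (hf : Integrable f μ) (hfe : μ[f|m] =ᵐ[μ] e)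
    (hg : StronglyMeasurable[m] g) (hfeg : Integrable (fun ω => (f ω - e ω) • g ω) μ) :
    ∫ ω, (f ω - e ω) • g ω ∂μ = 0 := by
  have he : Integrable e μ := integrable_condExp.congr hfe
  have hee : μ[e|m] =ᵐ[μ] μ[f|m] :=
    (condExp_congr_ae hfe.symm).trans (condExp_condExp_of_le le_rfl hm)
  have hres : μ[f - e|m] =ᵐ[μ] 0 := by
    filter_upwards [condExp_sub hf he m, hee] with ω h₁ h₂
    simp [h₁, h₂]
  calc ∫ ω, (f ω - e ω) • g ω ∂μ = ∫ ω, (μ[(f - e) • g|m]) ω ∂μ := (integral_condExp hm).symm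
    _ = ∫ ω, (μ[f - e|m] • g) ω ∂μ :=
      integral_congr_ae (condExp_smul_of_aestronglyMeasurable_right (hf.sub he) hfeg
        hg.aestronglyMeasurable)
    _ = ∫ _, (0 : E) ∂μ := integral_congr_ae (by filter_upwards [hres] with ω h; simp [h])
    _ = 0 := integral_zero _ _

section

variable [MeasurableSpace Ω] {μ : Measure Ω}

theorem MeasureTheory.Integrable.cond {f : Ω → E} (hf : Integrable f μ) (s : Set Ω) :
    Integrable f μ[|s] := by
  by_cases hs : μ s = 0
  · simp [cond_eq_zero_of_meas_eq_zero hs]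
  · exact hf.restrict.smul_measure (ENNReal.inv_ne_top.mpr hs)

variable [NormedSpace ℝ E] [IsFiniteMeasure μ]

theorem measureReal_smul_integral_cond (s : Set Ω) (f : Ω → E) :
    μ.real s • ∫ ω, f ω ∂μ[|s] = ∫ ω in s, f ω ∂μ := by
  by_cases hs : μ s = 0
  · simp [hs, Measure.restrict_eq_zero.mpr hs, measureReal_def]
  · rw [ProbabilityTheory.cond, integral_smul_measure, smul_smul, measureReal_def,
      ENNReal.toReal_inv, mul_inv_cancel₀ (ENNReal.toReal_ne_zero.mpr ⟨hs, measure_ne_top μ s⟩),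
      one_smul]

theorem setIntegral_eq_zero_of_integral_cond_eq_zero {s : Set Ω} {f : Ω → E}
    (h : ∫ ω, f ω ∂μ[|s] = 0) : ∫ ω in s, f ω ∂μ = 0 := by
  rw [← measureReal_smul_integral_cond, h, smul_zero]

end

theorem setIntegral_eq_zero_of_eqOn_sub_smul [NormedSpace ℝ E] [CompleteSpace E]
    {m m0 : MeasurableSpace Ω} {μ : Measure Ω} [IsFiniteMeasure μ] (hm : m ≤ m0) {s : Set Ω}
    (hs : MeasurableSet[m0] s) {F g : Ω → E} {f e : Ω → ℝ} (hF : Integrable F μ)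
    (hf : Integrable f μ) (hfe : μ[|s][f|m] =ᵐ[μ[|s]] e) (hg : StronglyMeasurable[m] g)
    (hFs : Set.EqOn F (fun ω => (f ω - e ω) • g ω) s) : ∫ ω in s, F ω ∂μ = 0 := by
  have hF' : F =ᵐ[μ[|s]] fun ω => (f ω - e ω) • g ω := ae_cond_of_forall_mem hs hFs
  refine setIntegral_eq_zero_of_integral_cond_eq_zero ?_
  rw [integral_congr_ae hF']
  exact integral_sub_smul_eq_zero_of_condExp_ae_eq hm (hf.cond s) hfe hg ((hF.cond s).congr hF')

end

theorem stmt_11_general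
    {Ω 𝒳 : Type*} [MeasurableSpace Ω] [MeasurableSpace 𝒳]
    (P : Measure Ω) [IsProbabilityMeasure P]
    (R Z D : Ω → Bool) (X : Ω → 𝒳) (Y : Ω → ℝ)
    (hR : Measurable R) (hZ : Measurable Z) (hD : Measurable D)
    (hX : Measurable X) (hYint : Integrable Y P)
    -- τ(z,x) := P(D=1 | Z=z, X=x, R=1)
    (tau : Bool → 𝒳 → ℝ)
    -- outcome decomposition: E(Y | Z, X, R=1) = 𝓗(X)·τ(Z,X) + ω(X) a.s.
    (Hfun wfun : 𝒳 → ℝ) (hHfun_meas : Measurable Hfun)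
    (hout : (P[|{ω | R ω = true}])[Y |
        MeasurableSpace.comap (fun ω => (Z ω, X ω)) inferInstance]
      =ᵐ[P[|{ω | R ω = true}]]
        fun ω => Hfun (X ω) * tau (Z ω) (X ω) + wfun (X ω))
    -- propensity score equality: P(D=1 | Z, X, R=0) = τ(Z,X) a.s.
    (hpse : (fun ω => tau (Z ω) (X ω)) =ᵐ[P[|{ω | R ω = false}]]
      (P[|{ω | R ω = false}])[(fun ω => if D ω then (1:ℝ) else 0) |
        MeasurableSpace.comap (fun ω => (Z ω, X ω)) inferInstance])
    -- arbitrary measurable G : 𝒳×{0,1} → ℝ^k with integrable integrand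
    (k : ℕ) (G : 𝒳 × Bool → EuclideanSpace ℝ (Fin k)) (hG : Measurable G)
    (hint : Integrable (fun ω =>
        ((if R ω then (1:ℝ) else 0) *
            (Y ω - Hfun (X ω) * tau (Z ω) (X ω) - wfun (X ω)) -
          (if R ω then (0:ℝ) else 1) * Hfun (X ω) *
            ((if D ω then (1:ℝ) else 0) - tau (Z ω) (X ω))) • G (X ω, Z ω)) P) :
    ∫ ω, ((if R ω then (1:ℝ) else 0) *
            (Y ω - Hfun (X ω) * tau (Z ω) (X ω) - wfun (X ω)) -
          (if R ω then (0:ℝ) else 1) * Hfun (X ω) *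
            ((if D ω then (1:ℝ) else 0) - tau (Z ω) (X ω))) • G (X ω, Z ω) ∂P = 0 := by
  have hm := (hZ.prodMk hX).comap_le
  have hZX : Measurable[MeasurableSpace.comap (fun ω => (Z ω, X ω)) inferInstance]
      fun ω => (Z ω, X ω) := comap_measurable _
  have hGm := (hG.comp measurable_swap).comp hZX
  have hDm : Measurable fun ω => if D ω then (1:ℝ) else 0 :=
    measurable_const.ite (hD (measurableSet_singleton true)) measurable_const
  have hDint : Integrable (fun ω => if D ω then (1:ℝ) else 0) P :=
    .of_bound hDm.aestronglyMeasurable 1 (.of_forall fun ω => by cases D ω <;> simp)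
  have hs : MeasurableSet {ω | R ω = true} := hR (measurableSet_singleton true)
  have hs' : MeasurableSet {ω | R ω = false} := hR (measurableSet_singleton false)
  have hsc : {ω | R ω = true}ᶜ = {ω | R ω = false} := by ext; simp
  rw [← integral_add_compl hs hint, hsc,
    setIntegral_eq_zero_of_eqOn_sub_smul hm hs hint hYint hout hGm.stronglyMeasurable ?treated,
    setIntegral_eq_zero_of_eqOn_sub_smul hm hs' hint hDint
      hpse.symm (((hHfun_meas.comp measurable_snd).comp hZX).neg.smul hGm).stronglyMeasurable
      ?untreated, add_zero]
  case treated =>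
    intro ω (hω : R ω = true)
    simp [hω, sub_sub]
  case untreated =>
    intro ω (hω : R ω = false)
    simp only [hω, Bool.false_eq_true, ↓reduceIte, zero_mul, one_mul, zero_sub,
      Function.comp_apply, Pi.smul_apply', Pi.neg_apply, Prod.swap_prod_mk, smul_smul]
    congr 1
    ring

/-- Unbiasedness of the 𝓜₂ estimating function at the truth:
If `E(Y | Z, X, R=1) = 𝓗(X)·τ(Z,X) + ω(X)` a.s. and `P(D=1 | Z,X,R=0) = τ(Z,X)` a.s., then
for every measurable `G : 𝒳×{0,1} → ℝ^k` with integrable integrand,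
`E[ G(X,Z)·{ R·[Y − 𝓗(X)τ(Z,X) − ω(X)] − (1−R)·𝓗(X)·[D − τ(Z,X)] } ] = 0`. -/
theorem stmt_11
    {Ω 𝒳 : Type*} [MeasurableSpace Ω] [MeasurableSpace 𝒳] [StandardBorelSpace 𝒳]
    (P : Measure Ω) [IsProbabilityMeasure P]
    (R Z D : Ω → Bool) (X : Ω → 𝒳) (Y : Ω → ℝ)
    (hR : Measurable R) (hZ : Measurable Z) (hD : Measurable D)
    (hX : Measurable X) (hY : Measurable Y) (hYint : Integrable Y P)
    -- τ(z,x) := P(D=1 | Z=z, X=x, R=1)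
    (tau : Bool → 𝒳 → ℝ) (htau_meas : Measurable fun p : Bool × 𝒳 => tau p.1 p.2)
    (htau_ver : (fun ω => tau (Z ω) (X ω)) =ᵐ[P[|{ω | R ω = true}]]
      (P[|{ω | R ω = true}])[(fun ω => if D ω then (1:ℝ) else 0) |
        MeasurableSpace.comap (fun ω => (Z ω, X ω)) inferInstance])
    -- outcome decomposition: E(Y | Z, X, R=1) = 𝓗(X)·τ(Z,X) + ω(X) a.s.
    (Hfun wfun : 𝒳 → ℝ) (hHfun_meas : Measurable Hfun) (hwfun_meas : Measurable wfun)
    (hout : (P[|{ω | R ω = true}])[Y |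
        MeasurableSpace.comap (fun ω => (Z ω, X ω)) inferInstance]
      =ᵐ[P[|{ω | R ω = true}]]
        fun ω => Hfun (X ω) * tau (Z ω) (X ω) + wfun (X ω))
    -- propensity score equality: P(D=1 | Z, X, R=0) = τ(Z,X) a.s.
    (hpse : (fun ω => tau (Z ω) (X ω)) =ᵐ[P[|{ω | R ω = false}]]
      (P[|{ω | R ω = false}])[(fun ω => if D ω then (1:ℝ) else 0) |
        MeasurableSpace.comap (fun ω => (Z ω, X ω)) inferInstance])
    -- arbitrary measurable G : 𝒳×{0,1} → ℝ^k with integrable integrand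
    (k : ℕ) (G : 𝒳 × Bool → EuclideanSpace ℝ (Fin k)) (hG : Measurable G)
    (hint : Integrable (fun ω =>
        ((if R ω then (1:ℝ) else 0) *
            (Y ω - Hfun (X ω) * tau (Z ω) (X ω) - wfun (X ω)) -
          (if R ω then (0:ℝ) else 1) * Hfun (X ω) *
            ((if D ω then (1:ℝ) else 0) - tau (Z ω) (X ω))) • G (X ω, Z ω)) P) :
    ∫ ω, ((if R ω then (1:ℝ) else 0) *
            (Y ω - Hfun (X ω) * tau (Z ω) (X ω) - wfun (X ω)) -
          (if R ω then (0:ℝ) else 1) * Hfun (X ω) *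
            ((if D ω then (1:ℝ) else 0) - tau (Z ω) (X ω))) • G (X ω, Z ω) ∂P = 0 :=
  stmt_11_general P R Z D X Y hR hZ hD hX hYint tau Hfun wfun hHfun_meas hout hpse k G hG hint
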